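/- In any AVL tree, the number a of leaves and the number b of depth-1 nodes satisfy a ≤ 3b (assuming the tree has at least 2 nodes), since every leaf is either the child of a depth-1 node or the child of an unbalanced depth-2 node, and each depth-1 node has at most 2 leaf children while each unbalanced depth-2 node has exactly one depth-1 child. -/

import Mathlib

/-- Rooted plane binary trees: `nil` is the empty tree. -/
inductive BTree : Type
  | nil : BTree
  | node : BTree → BTree → BTree
deriving DecidableEq

/-- Height, with the empty tree having height `-1`. -/
def BTree.ht : BTree → ℤ
  | .nil => -1
  | .node l r => 1 + max l.ht r.ht

/-- Number of nodes. -/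
def BTree.size : BTree → ℕ
  | .nil => 0
  | .node l r => 1 + l.size + r.size

/-- AVL property: at every node the subtree heights differ by at most 1. -/
def BTree.isAVL : BTree → Prop
  | .nil => True
  | .node l r => |l.ht - r.ht| ≤ 1 ∧ l.isAVL ∧ r.isAVL

/-- Count the nodes (subtree positions) of a tree satisfying a predicate. -/
def BTree.cnt (p : BTree → Bool) : BTree → ℕ
  | .nil => 0
  | .node l r => (if p (.node l r) then 1 else 0) + l.cnt p + r.cnt p

/-- A node is unbalanced if its two subtrees have different heights. -/
def BTree.unbal : BTree → Bool
  | .nil => false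
  | .node l r => decide (l.ht ≠ r.ht)

/-- Number of depth-`k` nodes, i.e. nodes whose subtree has height `k`. -/
def BTree.cntDepth (k : ℤ) (t : BTree) : ℕ := t.cnt (fun s => decide (s.ht = k))

/-!
Every leaf is a child of a depth-1 node or of an unbalanced depth-2 node. A depth-1 node has at
most two leaf children, and an unbalanced depth-2 node has exactly one depth-1 child besides its
leaf, so each depth-1 node accounts for at most three leaves. Inductively, an AVL tree of height
`h` with `a` leaves and `b` depth-1 nodes satisfies `a + [h = 1] ≤ 3b + [h = 0]`: the slack of a
height-1 subtree pays for the leaf beside it under an unbalanced height-2 parent.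
-/

namespace BTree

theorem neg_one_le_ht (t : BTree) : -1 ≤ t.ht := by
  cases t with
  | nil => simp [ht]
  | node l r =>
    have := neg_one_le_ht l
    simp only [ht]
    omega

theorem one_le_ht_of_two_le_size {t : BTree} (h : 2 ≤ t.size) : 1 ≤ t.ht := by
  match t, h with
  | node (node a b) r, _ | node l (node a b), _ =>
    have := neg_one_le_ht a
    simp only [ht]
    omega

theorem cntDepth_node (k : ℤ) (l r : BTree) :
    (node l r).cntDepth k = (if 1 + max l.ht r.ht = k then 1 else 0) + l.cntDepth k + r.cntDepth k := by
  by_cases hk : 1 + max l.ht r.ht = k <;> simp [cntDepth, cnt, ht, hk]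

theorem cntDepth_zero_add_le (t : BTree) (h : t.isAVL) :
    (t.cntDepth 0 : ℤ) + (if t.ht = 1 then 1 else 0) ≤
      3 * t.cntDepth 1 + (if t.ht = 0 then 1 else 0) := by
  induction t with
  | nil => simp [cntDepth, cnt, ht]
  | node l r ihl ihr =>
    obtain ⟨hbal, hl, hr⟩ := h
    specialize ihl hl
    specialize ihr hr
    have := neg_one_le_ht l
    have := neg_one_le_ht r
    rw [abs_le] at hbal
    simp only [cntDepth_node, ht]
    push_cast [Nat.cast_ite]
    split_ifs at * <;> omega

end BTree

/-- In any AVL tree with at least 2 nodes, the number `a` of leaves and the number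
`b` of depth-1 nodes satisfy `a ≤ 3b`. -/
theorem avl_leaves_le_three_depth_one (t : BTree) (hAVL : t.isAVL) (hn : 2 ≤ t.size) :
    t.cntDepth 0 ≤ 3 * t.cntDepth 1 := by
  have hht := BTree.one_le_ht_of_two_le_size hn
  have key := t.cntDepth_zero_add_le hAVL
  split_ifs at key <;> omega
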